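/- If a connected graph G on n vertices can be covered by a collection L of λ-subgraphs with |L| ≤ (2n−3)/λ + 1, then the uniform distribution over L is a defense strategy under which every vertex is covered with probability at least (λ/n) / (2 + (λ−3)/n); consequently this strategy achieves minimum vertex probability at least p*(G) / (2 + (λ−3)/n). -/

import Mathlib

open Finset

variable {V : Type*}

/-- A λ-subgraph: a set of `lam` vertices inducing a connected subgraph of `G`. -/
def IsLamSub (G : SimpleGraph V) (lam : ℕ) (s : Finset V) : Prop :=
  s.card = lam ∧ (G.induce (s : Set V)).Connected

/-- A defense strategy: a probability distribution over λ-subgraphs of `G`. -/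
def IsDefStrat [Fintype V] [DecidableEq V] (G : SimpleGraph V) (lam : ℕ)
    (q : Finset V → ℝ) : Prop :=
  (∀ s, 0 ≤ q s) ∧ (∀ s, q s ≠ 0 → IsLamSub G lam s) ∧ ∑ s : Finset V, q s = 1

/-- The probability that vertex `i` is covered under strategy `q`. -/
def vertexProb [Fintype V] [DecidableEq V] (q : Finset V → ℝ) (i : V) : ℝ :=
  ∑ s : Finset V, if i ∈ s then q s else 0

/-- The MaxMin probability `p*(G)`: maximum over defense strategies of the
minimum vertex probability. -/
noncomputable def pstar [Fintype V] [DecidableEq V] (G : SimpleGraph V) (lam : ℕ) : ℝ :=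
  sSup {x : ℝ | ∃ q, IsDefStrat G lam q ∧ x = ⨅ i, vertexProb q i}

lemma vertexProb_nonneg [Fintype V] [DecidableEq V] (q : Finset V → ℝ)
    (hq : ∀ s, 0 ≤ q s) (i : V) : 0 ≤ vertexProb q i := by
  apply Finset.sum_nonneg
  intro s _
  split
  · exact hq s
  · exact le_rfl

lemma pstar_le [Fintype V] [DecidableEq V] (G : SimpleGraph V) (lam : ℕ)
    (h1 : 1 ≤ lam) (h2 : lam ≤ Fintype.card V) :
    pstar G lam ≤ (lam : ℝ) / Fintype.card V := by
  have hn : 0 < Fintype.card V := lt_of_lt_of_le h1 h2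
  have hne : Nonempty V := Fintype.card_pos_iff.mp hn
  apply Real.sSup_le
  · rintro x ⟨q, ⟨hq0, hqLam, hqsum⟩, rfl⟩
    -- total sum of vertex probabilities is lam
    have htot : ∑ i : V, vertexProb q i = (lam : ℝ) := by
      unfold vertexProb
      rw [Finset.sum_comm]
      have : ∀ s : Finset V, ∑ i : V, (if i ∈ s then q s else 0) = (lam : ℝ) * q s := by
        intro s
        rw [Finset.sum_ite_mem, Finset.univ_inter, Finset.sum_const, nsmul_eq_mul]
        by_cases hqs : q s = 0
        · simp [hqs]
        · rw [(hqLam s hqs).1]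
      rw [Finset.sum_congr rfl fun s _ => this s, ← Finset.mul_sum, hqsum, mul_one]
    have hbdd : BddBelow (Set.range fun i => vertexProb q i) :=
      Set.Finite.bddBelow (Set.finite_range _)
    have hle : ∀ i : V, (⨅ j, vertexProb q j) ≤ vertexProb q i := fun i =>
      ciInf_le hbdd i
    have hsumle : (Fintype.card V : ℝ) * (⨅ j, vertexProb q j) ≤ (lam : ℝ) := by
      calc (Fintype.card V : ℝ) * (⨅ j, vertexProb q j)
          = ∑ _i : V, (⨅ j, vertexProb q j) := by
            rw [Finset.sum_const, nsmul_eq_mul]; simp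
        _ ≤ ∑ i : V, vertexProb q i := Finset.sum_le_sum fun i _ => hle i
        _ = (lam : ℝ) := htot
    rw [le_div_iff₀ (by exact_mod_cast hn)]
    linarith
  · positivity

theorem stmt11 [Fintype V] [DecidableEq V] (G : SimpleGraph V) (hconn : G.Connected)
    (lam : ℕ) (h1 : 1 ≤ lam) (h2 : lam ≤ Fintype.card V)
    (L : Finset (Finset V)) (hL : ∀ s ∈ L, IsLamSub G lam s)
    (hcov : ∀ v : V, ∃ s ∈ L, v ∈ s)
    (hsize : (L.card : ℝ) ≤ (2 * Fintype.card V - 3) / lam + 1) :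
    IsDefStrat G lam (fun s => if s ∈ L then (1 : ℝ) / L.card else 0) ∧
    (∀ i : V, ((lam : ℝ) / Fintype.card V) / (2 + ((lam : ℝ) - 3) / Fintype.card V)
        ≤ vertexProb (fun s => if s ∈ L then (1 : ℝ) / L.card else 0) i) ∧
    (∀ i : V, pstar G lam / (2 + ((lam : ℝ) - 3) / Fintype.card V)
        ≤ vertexProb (fun s => if s ∈ L then (1 : ℝ) / L.card else 0) i) := by
  set n := Fintype.card V with hn_def
  have hn : 0 < n := lt_of_lt_of_le h1 h2
  have hne : Nonempty V := Fintype.card_pos_iff.mp hn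
  have hLne : L.Nonempty := by
    obtain ⟨s, hs, _⟩ := hcov (Classical.arbitrary V)
    exact ⟨s, hs⟩
  have hLcard : 0 < L.card := Finset.card_pos.mpr hLne
  have hLcardR : (0 : ℝ) < L.card := by exact_mod_cast hLcard
  set q : Finset V → ℝ := fun s => if s ∈ L then (1 : ℝ) / L.card else 0 with hq_def
  have hq0 : ∀ s, 0 ≤ q s := by
    intro s; simp only [hq_def]; split
    · positivity
    · exact le_rfl
  -- the strategy
  have hstrat : IsDefStrat G lam q := by
    refine ⟨hq0, ?_, ?_⟩
    · intro s hs
      simp only [hq_def] at hs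
      by_cases h : s ∈ L
      · exact hL s h
      · simp [h] at hs
    · simp only [hq_def]
      rw [Finset.sum_ite_mem, Finset.univ_inter, Finset.sum_const, nsmul_eq_mul]
      field_simp
  -- vertexProb ≥ 1 / L.card
  have hvp : ∀ i : V, (1 : ℝ) / L.card ≤ vertexProb q i := by
    intro i
    obtain ⟨s₀, hs₀L, hs₀i⟩ := hcov i
    have : q s₀ ≤ vertexProb q i := by
      unfold vertexProb
      have := Finset.single_le_sum (f := fun s : Finset V => if i ∈ s then q s else 0)
        (fun s _ => by split; exacts [hq0 s, le_rfl]) (Finset.mem_univ s₀)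
      simpa [hs₀i] using this
    calc (1 : ℝ) / L.card = q s₀ := by simp [hq_def, hs₀L]
      _ ≤ vertexProb q i := this
  have hvp0 : ∀ i : V, 0 ≤ vertexProb q i := vertexProb_nonneg q hq0
  set D : ℝ := 2 + ((lam : ℝ) - 3) / n with hD_def
  by_cases hD : D = 0
  · refine ⟨hstrat, ?_, ?_⟩ <;> intro i <;> rw [hD, div_zero] <;> exact hvp0 i
  · have hnR : (0 : ℝ) < n := by exact_mod_cast hn
    have hlamR : (0 : ℝ) < lam := by exact_mod_cast h1
    have hDnn : 0 ≤ D := by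
      have hn1 : (1 : ℝ) ≤ n := by exact_mod_cast hn
      have hl1 : (1 : ℝ) ≤ lam := by exact_mod_cast h1
      have heq : D = (2 * (n : ℝ) + lam - 3) / n := by rw [hD_def]; field_simp; ring
      rw [heq]
      exact div_nonneg (by linarith) (by linarith)
    have hDpos : 0 < D := lt_of_le_of_ne hDnn (Ne.symm hD)
    have hkey : ((lam : ℝ) / n) / D ≤ 1 / L.card := by
      rw [div_le_div_iff₀ hDpos hLcardR]
      calc (lam : ℝ) / n * L.card
          ≤ (lam : ℝ) / n * ((2 * n - 3) / lam + 1) := by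
            apply mul_le_mul_of_nonneg_left hsize (by positivity)
        _ = 1 * D := by
            rw [hD_def]; field_simp; ring
    refine ⟨hstrat, fun i => le_trans hkey (hvp i), fun i => ?_⟩
    have hps : pstar G lam ≤ (lam : ℝ) / n := pstar_le G lam h1 h2
    calc pstar G lam / D ≤ ((lam : ℝ) / n) / D := by gcongr
      _ ≤ vertexProb q i := le_trans hkey (hvp i)
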